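/- arXiv:1601.05645 — 2 statements merged into one kernel-verified Lean document; each statement's English description precedes it below -/
import Mathlib

section
/- If s_{k-1} s_k ≥ r_k t_k for all k ≥ 1 (with all r_k, s_k, t_k nonnegative), then the sequence of Catalan-like numbers (a_{n,0})_{n≥0} defined by the recursive matrix is log-convex. -/
/-!
The rows of `A` obey `a_{n+1} = J a_n` for the tridiagonal matrix `J` with subdiagonal `r`,
diagonal `s` and superdiagonal `t`. Such a `J` is totally positive of order 2 as soon as its
entries and its adjacent diagonal minors `s_{k-1} s_k - r_k t_k` are nonnegative, since every
other `2 × 2` minor is a product of entries or zero. By the `2 × 2` Cauchy–Binet formula,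
`J` then maps a pair of rows `(a_n, a_{n+1})` whose column minors
`a_{n,j} a_{n+1,k} - a_{n,k} a_{n+1,j}` (`j ≤ k`) are nonnegative to the pair
`(a_{n+1}, a_{n+2})` with the same property. Finally
`a_{n,0} a_{n+2,0} - a_{n+1,0}^2 = t_1 (a_{n,0} a_{n+1,1} - a_{n,1} a_{n+1,0}) ≥ 0`.
-/

open Finset

theorem Finset.two_mul_sum_mul_sum_sub_sum_mul_sum {ι R : Type*} [CommRing R] (S : Finset ι)
    (x y p q : ι → R) :
    2 * ((∑ i ∈ S, x i * p i) * (∑ i ∈ S, y i * q i)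
      - (∑ i ∈ S, y i * p i) * (∑ i ∈ S, x i * q i))
      = ∑ i ∈ S, ∑ l ∈ S, (x i * y l - x l * y i) * (p i * q l - p l * q i) := by
  set F : ι → ι → R := fun i l => x i * p i * (y l * q l) - x i * q i * (y l * p l) with hF
  have hsplit : ∀ i l, (x i * y l - x l * y i) * (p i * q l - p l * q i) = F i l + F l i := by
    intro i l
    simp only [hF]
    ring
  have hdiff : (∑ i ∈ S, x i * p i) * (∑ i ∈ S, y i * q i)
      - (∑ i ∈ S, y i * p i) * (∑ i ∈ S, x i * q i) = ∑ i ∈ S, ∑ l ∈ S, F i l := by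
    rw [mul_comm (∑ i ∈ S, y i * p i)]
    simp only [hF, sum_mul_sum, sum_sub_distrib]
  simp only [hsplit, sum_add_distrib, hdiff]
  rw [sum_comm (f := fun l i => F i l), two_mul]

theorem Finset.sum_mul_sum_sub_sum_mul_sum_nonneg {ι R : Type*} [LinearOrder ι] [CommRing R]
    [LinearOrder R] [IsStrictOrderedRing R] (S : Finset ι) (x y p q : ι → R)
    (hxy : ∀ i l, i ≤ l → 0 ≤ x i * y l - x l * y i)
    (hpq : ∀ i l, i ≤ l → 0 ≤ p i * q l - p l * q i) :
    0 ≤ (∑ i ∈ S, x i * p i) * (∑ i ∈ S, y i * q i)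
      - (∑ i ∈ S, y i * p i) * (∑ i ∈ S, x i * q i) := by
  have hterm : ∀ i l, 0 ≤ (x i * y l - x l * y i) * (p i * q l - p l * q i) := by
    intro i l
    rcases le_total i l with h | h
    · exact mul_nonneg (hxy i l h) (hpq i l h)
    · nlinarith [hxy l i h, hpq l i h]
  have := sum_nonneg fun i (_ : i ∈ S) => sum_nonneg fun l (_ : l ∈ S) => hterm i l
  rw [← two_mul_sum_mul_sum_sub_sum_mul_sum] at this
  linarith

def jacobi (r s t : ℕ → ℝ) (k i : ℕ) : ℝ :=
  (if k = i + 1 then r k else 0) + (if k = i then s k else 0) + (if i = k + 1 then t i else 0)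

structure IsCatalanLike (a : ℕ → ℕ → ℝ) (r s t : ℕ → ℝ) : Prop where
  zero_zero : a 0 0 = 1
  eq_zero_of_lt : ∀ n k, n < k → a n k = 0
  succ_zero : ∀ n, a (n + 1) 0 = s 0 * a n 0 + t 1 * a n 1
  succ_succ : ∀ n k, a (n + 1) (k + 1)
    = r (k + 1) * a n k + s (k + 1) * a n (k + 1) + t (k + 2) * a n (k + 2)

section

variable {a : ℕ → ℕ → ℝ} {r s t : ℕ → ℝ}

@[simp] theorem jacobi_self (k : ℕ) : jacobi r s t k k = s k := by simp [jacobi]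

@[simp] theorem jacobi_succ_self (k : ℕ) : jacobi r s t (k + 1) k = r (k + 1) := by
  simp [jacobi]; omega

@[simp] theorem jacobi_self_succ (k : ℕ) : jacobi r s t k (k + 1) = t (k + 1) := by
  simp [jacobi]; omega

theorem jacobi_eq_zero {k i : ℕ} (h : k + 1 < i ∨ i + 1 < k) : jacobi r s t k i = 0 := by
  simp only [jacobi]
  split_ifs <;> first | omega | simp

theorem jacobi_nonneg (hr : ∀ k, 0 ≤ r k) (hs : ∀ k, 0 ≤ s k) (ht : ∀ k, 0 ≤ t k) (k i : ℕ) :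
    0 ≤ jacobi r s t k i := by
  unfold jacobi
  have := hr k; have := hs k; have := ht i
  split_ifs <;> linarith

theorem jacobi_minor_nonneg (hr : ∀ k, 0 ≤ r k) (hs : ∀ k, 0 ≤ s k) (ht : ∀ k, 0 ≤ t k)
    (hcond : ∀ k : ℕ, r (k + 1) * t (k + 1) ≤ s k * s (k + 1)) {j k i l : ℕ}
    (hjk : j ≤ k) (hil : i ≤ l) :
    0 ≤ jacobi r s t j i * jacobi r s t k l - jacobi r s t j l * jacobi r s t k i := by
  rcases hjk.eq_or_lt with rfl | hjk_lt
  · rw [mul_comm, sub_self]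
  rcases hil.eq_or_lt with rfl | hil_lt
  · rw [sub_self]
  by_cases hadj : l ≤ j + 1 ∧ k ≤ i + 1
  · obtain ⟨rfl, rfl, rfl⟩ : j = i ∧ l = j + 1 ∧ k = j + 1 := by omega
    simpa [mul_comm] using hcond j
  · have hzero : jacobi r s t j l * jacobi r s t k i = 0 := by
      rcases not_and_or.mp hadj with h | h
      · rw [jacobi_eq_zero (by omega), zero_mul]
      · rw [jacobi_eq_zero (k := k) (by omega), mul_zero]
    rw [hzero, sub_zero]
    exact mul_nonneg (jacobi_nonneg hr hs ht j i) (jacobi_nonneg hr hs ht k l)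

namespace IsCatalanLike

theorem succ_eq_sum_jacobi (ha : IsCatalanLike a r s t) (n : ℕ) {k N : ℕ} (hN : k + 2 ≤ N) :
    a (n + 1) k = ∑ i ∈ range N, jacobi r s t k i * a n i := by
  cases k with
  | zero =>
    simp [jacobi, add_mul, ite_mul, sum_add_distrib, sum_ite_eq, sum_ite_eq', ha.succ_zero,
      show 0 < N by omega, show 1 < N by omega]
  | succ k =>
    simp [jacobi, add_mul, ite_mul, sum_add_distrib, sum_ite_eq, sum_ite_eq', ha.succ_succ,
      show k < N by omega, show k + 1 < N by omega, show k + 2 < N by omega]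

theorem nonneg (ha : IsCatalanLike a r s t) (hr : ∀ k, 0 ≤ r k) (hs : ∀ k, 0 ≤ s k)
    (ht : ∀ k, 0 ≤ t k) (n k : ℕ) : 0 ≤ a n k := by
  induction n generalizing k with
  | zero =>
    rcases k.eq_zero_or_pos with rfl | hk
    · exact ha.zero_zero ▸ zero_le_one
    · exact (ha.eq_zero_of_lt 0 k hk).ge
  | succ n ih =>
    rw [ha.succ_eq_sum_jacobi n le_rfl]
    exact sum_nonneg fun i _ => mul_nonneg (jacobi_nonneg hr hs ht k i) (ih i)

theorem minor_nonneg (ha : IsCatalanLike a r s t) (hr : ∀ k, 0 ≤ r k) (hs : ∀ k, 0 ≤ s k)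
    (ht : ∀ k, 0 ≤ t k) (hcond : ∀ k : ℕ, r (k + 1) * t (k + 1) ≤ s k * s (k + 1))
    (n : ℕ) {j k : ℕ} (hjk : j ≤ k) :
    0 ≤ a n j * a (n + 1) k - a n k * a (n + 1) j := by
  induction n generalizing j k with
  | zero =>
    rcases j.eq_zero_or_pos with rfl | hj
    · rcases k.eq_zero_or_pos with rfl | hk
      · rw [sub_self]
      · rw [ha.zero_zero, ha.eq_zero_of_lt 0 k hk, one_mul, zero_mul, sub_zero]
        exact ha.nonneg hr hs ht 1 k
    · rw [ha.eq_zero_of_lt 0 j hj, ha.eq_zero_of_lt 0 k (hj.trans_le hjk), zero_mul, zero_mul,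
        sub_self]
  | succ n ih =>
    rw [ha.succ_eq_sum_jacobi (n + 1) (le_refl (k + 2)),
      ha.succ_eq_sum_jacobi (n + 1) (by omega : j + 2 ≤ k + 2),
      ha.succ_eq_sum_jacobi n (le_refl (k + 2)),
      ha.succ_eq_sum_jacobi n (by omega : j + 2 ≤ k + 2)]
    exact sum_mul_sum_sub_sum_mul_sum_nonneg _ _ _ _ _
      (fun _ _ hil => jacobi_minor_nonneg hr hs ht hcond hjk hil) (fun _ _ hil => ih hil)

end IsCatalanLike

end

/-- If $s_{k-1} s_k \ge r_k t_k$ for all $k \ge 1$, then the Catalan-like numbers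
$(a_{n,0})$ form a log-convex sequence. -/
theorem catalanLike_logConvex (a : ℕ → ℕ → ℝ) (r s t : ℕ → ℝ)
    (hr : ∀ k, 0 ≤ r k) (hs : ∀ k, 0 ≤ s k) (ht : ∀ k, 0 ≤ t k)
    (ha0 : a 0 0 = 1) (hzero : ∀ n k, n < k → a n k = 0)
    (hrec0 : ∀ n, a (n + 1) 0 = s 0 * a n 0 + t 1 * a n 1)
    (hrec : ∀ n k, a (n + 1) (k + 1)
      = r (k + 1) * a n k + s (k + 1) * a n (k + 1) + t (k + 2) * a n (k + 2))
    (hcond : ∀ k : ℕ, r (k + 1) * t (k + 1) ≤ s k * s (k + 1)) :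
    ∀ n : ℕ, a (n + 1) 0 ^ 2 ≤ a n 0 * a (n + 2) 0 := by
  intro n
  have ha : IsCatalanLike a r s t := ⟨ha0, hzero, hrec0, hrec⟩
  have hminor := ha.minor_nonneg hr hs ht hcond n zero_le_one
  have hgap : a n 0 * a (n + 2) 0 - a (n + 1) 0 ^ 2
      = t 1 * (a n 0 * a (n + 1) 1 - a n 1 * a (n + 1) 0) := by
    rw [hrec0 (n + 1), hrec0 n]
    ring
  exact sub_nonneg.mp (hgap ▸ mul_nonneg (ht 1) hminor)
end

section
/- Let A be the recursive matrix defined by a_{0,0}=1, a_{n+1,k} = r_k a_{n,k-1} + s_k a_{n,k} + t_{k+1} a_{n,k+1}, with all parameters nonnegative. If s_0 ≥ 1 and s_k ≥ r_k t_k + 1 for all k ≥ 1, then A is totally positive. -/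
/-- An infinite matrix is totally positive if all its minors are nonnegative. -/
def IsTotallyPos (M : ℕ → ℕ → ℝ) : Prop :=
  ∀ (m : ℕ) (f g : Fin m → ℕ), StrictMono f → StrictMono g →
    0 ≤ (Matrix.of fun i j => M (f i) (g j)).det

/-!
Row `n + 1` of `A` is row `n` times the tridiagonal production matrix `J` with entries
`J (k-1) k = r k`, `J k k = s k`, `J (k+1) k = t (k+1)`. Under the hypotheses its pivots
`u 0 = s 0`, `u k = s k - r k * t k / u (k-1)` are all `≥ 1`, so `J = L U` with `L` lower
bidiagonal with unit diagonal and `U` upper bidiagonal, both with nonnegative entries.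
Right multiplication by such a bidiagonal matrix keeps all maximal minors of a block of rows
nonnegative (expand each column multilinearly). Row `0` is the unit vector `e₀`, so a minor
using row `0` is either zero or a minor of the remaining rows; induction on the largest row
index then gives total positivity.
-/

open Matrix

/-- `bidiagMul α β τ x` is the row vector `x B`, where column `k` of `B` has the entry `α k` in
row `k` and `β k` in row `τ k`. -/
def bidiagMul (α β : ℕ → ℝ) (τ : ℕ → ℕ) (x : ℕ → ℝ) : ℕ → ℝ :=
  fun k => α k * x k + β k * x (τ k)

def MaximalMinorsNonneg {m : ℕ} (R : Fin m → ℕ → ℝ) : Prop :=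
  ∀ g : Fin m → ℕ, StrictMono g → 0 ≤ (of fun i j => R i (g j)).det

namespace MaximalMinorsNonneg

variable {m : ℕ} {R : Fin m → ℕ → ℝ}

theorem of_isEmpty [IsEmpty (Fin m)] (R : Fin m → ℕ → ℝ) : MaximalMinorsNonneg R :=
  fun g _ => by rw [det_isEmpty]; exact zero_le_one

theorem det_nonneg_of_monotone (hR : MaximalMinorsNonneg R) {g : Fin m → ℕ} (hg : Monotone g) :
    0 ≤ (of fun i j => R i (g j)).det := by
  by_cases hsg : StrictMono g
  · exact hR g hsg
  · obtain ⟨j, j', hjj', hle⟩ : ∃ j j', j < j' ∧ g j' ≤ g j := by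
      simpa [StrictMono] using hsg
    rw [det_zero_of_column_eq hjj'.ne fun i => by simp [le_antisymm (hg hjj'.le) hle]]

theorem bidiagMul (hR : MaximalMinorsNonneg R) {α β : ℕ → ℝ} {τ : ℕ → ℕ}
    (hα : ∀ k, 0 ≤ α k) (hβ : ∀ k, 0 ≤ β k) (hτ : Monotone τ)
    (hτ_le : ∀ k, τ k ≤ k + 1) (hle_τ : ∀ k, k ≤ τ k + 1) :
    MaximalMinorsNonneg fun i => _root_.bidiagMul α β τ (R i) := by
  intro g hg
  -- Since `g` is strictly increasing and `τ` moves no index by more than one, every choice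
  -- between column `g j` and column `τ (g j)` is still monotone.
  have hchoice : ∀ s : Finset (Fin m), Monotone (s.piecewise g (τ ∘ g)) := by
    intro s j j' hjj'
    rcases hjj'.eq_or_lt with rfl | hlt
    · rfl
    have := hg hlt
    have := hτ this.le
    have := hτ_le (g j)
    have := hle_τ (g j')
    by_cases hj : j ∈ s <;> by_cases hj' : j' ∈ s <;>
      simp only [Finset.piecewise_eq_of_mem, Finset.piecewise_eq_of_notMem, hj, hj',
        Function.comp_apply, not_false_eq_true] <;> omega
  have hsplit : (of fun i j => _root_.bidiagMul α β τ (R i) (g j))ᵀ =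
      (fun j => α (g j) • fun i => R i (g j)) + fun j => β (g j) • fun i => R i (τ (g j)) := by
    ext j i
    simp [_root_.bidiagMul]
  rw [← det_transpose, hsplit]
  change 0 ≤ detRowAlternating _
  rw [AlternatingMap.map_add_univ]
  refine Finset.sum_nonneg fun s _ => ?_
  have hpiecewise : s.piecewise (fun j => α (g j) • fun i => R i (g j))
      (fun j => β (g j) • fun i => R i (τ (g j))) =
      fun j => s.piecewise (α ∘ g) (β ∘ g) j • fun i => R i (s.piecewise g (τ ∘ g) j) := by
    ext j i
    by_cases hj : j ∈ s <;> simp [hj]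
  rw [hpiecewise, AlternatingMap.map_smul_univ, smul_eq_mul]
  refine mul_nonneg (Finset.prod_nonneg fun j _ => ?_) ?_
  · by_cases hj : j ∈ s <;> simp [hj, hα, hβ]
  · have := hR.det_nonneg_of_monotone (hchoice s)
    rwa [← det_transpose] at this

theorem cons_single {R : Fin (m + 1) → ℕ → ℝ} (h0 : R 0 = Pi.single 0 1)
    (hR : MaximalMinorsNonneg fun i => R i.succ) : MaximalMinorsNonneg R := by
  intro g hg
  have hsingle : 0 ≤ (Pi.single 0 1 : ℕ → ℝ) := Pi.single_nonneg.2 zero_le_one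
  rw [det_succ_row_zero, Finset.sum_eq_single 0]
  · exact mul_nonneg (by simpa [h0] using hsingle (g 0)) (hR _ (hg.comp Fin.strictMono_succ))
  · intro j _ hj
    have : g 0 < g j := hg (Fin.pos_of_ne_zero hj)
    simp [h0, (Nat.zero_lt_of_lt this).ne']
  · simp

end MaximalMinorsNonneg

theorem isTotallyPos_of_step {a : ℕ → ℕ → ℝ} (T : (ℕ → ℝ) → ℕ → ℝ)
    (hT : ∀ m (R : Fin m → ℕ → ℝ), MaximalMinorsNonneg R → MaximalMinorsNonneg fun i => T (R i))
    (ha0 : a 0 = Pi.single 0 1) (hsucc : ∀ n, a (n + 1) = T (a n)) : IsTotallyPos a := by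
  suffices h : ∀ n m (f : Fin m → ℕ), StrictMono f → (∀ i, f i < n) →
      MaximalMinorsNonneg fun i => a (f i) from
    fun m f g hf hg =>
      h _ m f hf (fun i => Nat.lt_succ_of_le (Finset.le_sup (Finset.mem_univ i))) g hg
  intro n
  induction n with
  | zero =>
    intro m f _ hf
    have : IsEmpty (Fin m) := ⟨fun i => Nat.not_lt_zero _ (hf i)⟩
    exact .of_isEmpty _
  | succ n ih =>
    have of_pos : ∀ m (f : Fin m → ℕ), StrictMono f → (∀ i, 0 < f i) → (∀ i, f i < n + 1) →
        MaximalMinorsNonneg fun i => a (f i) := by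
      intro m f hf hpos hlt
      have hpred : (fun i => a (f i)) = fun i => T (a (f i - 1)) := by
        funext i
        rw [← hsucc, Nat.sub_add_cancel (hpos i)]
      rw [hpred]
      refine hT _ _ (ih _ _ (fun i j hij => ?_) fun i => ?_)
      · have := hf hij; have := hpos i; omega
      · have := hlt i; have := hpos i; omega
    intro m f hf hlt
    rcases m with _ | m
    · exact .of_isEmpty _
    by_cases hf0 : f 0 = 0
    · refine .cons_single (by rw [hf0, ha0])
        (of_pos _ _ (hf.comp Fin.strictMono_succ) (fun i => ?_) fun i => hlt _)
      exact hf0 ▸ hf (Fin.succ_pos i)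
    · refine of_pos _ _ hf (fun i => ?_) hlt
      exact (Nat.pos_of_ne_zero hf0).trans_le (hf.monotone (Fin.zero_le i))

noncomputable def pivot (r s t : ℕ → ℝ) : ℕ → ℝ
  | 0 => s 0
  | k + 1 => s (k + 1) - r (k + 1) * t (k + 1) / pivot r s t k

theorem one_le_pivot {r s t : ℕ → ℝ} (hr : ∀ k, 0 ≤ r k) (ht : ∀ k, 0 ≤ t k) (h0 : 1 ≤ s 0)
    (hk : ∀ k, 1 ≤ k → r k * t k + 1 ≤ s k) (k : ℕ) : 1 ≤ pivot r s t k := by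
  induction k with
  | zero => exact h0
  | succ k ih =>
    have := div_le_self (mul_nonneg (hr (k + 1)) (ht (k + 1))) ih
    have := hk (k + 1) k.succ_pos
    rw [pivot]
    linarith

/-- `x ↦ x J` for the production matrix `J`, computed through its factorisation `J = L U`. -/
noncomputable def tridiagStep (r s t : ℕ → ℝ) (x : ℕ → ℝ) : ℕ → ℝ :=
  bidiagMul (pivot r s t) (fun k => if k = 0 then 0 else r k) (· - 1)
    (bidiagMul 1 (fun k => t (k + 1) / pivot r s t k) (· + 1) x)

section tridiagStep

variable {r s t : ℕ → ℝ} (x : ℕ → ℝ)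

theorem tridiagStep_zero (h : s 0 ≠ 0) : tridiagStep r s t x 0 = s 0 * x 0 + t 1 * x 1 := by
  simp only [tridiagStep, bidiagMul, pivot]
  field_simp
  simp

theorem tridiagStep_succ (k : ℕ) (hk : pivot r s t k ≠ 0) (hk' : pivot r s t (k + 1) ≠ 0) :
    tridiagStep r s t x (k + 1) =
      r (k + 1) * x k + s (k + 1) * x (k + 1) + t (k + 2) * x (k + 2) := by
  have hpivot : pivot r s t (k + 1) + r (k + 1) * t (k + 1) / pivot r s t k = s (k + 1) := by
    rw [pivot]; ring
  simp only [tridiagStep, bidiagMul, Pi.one_apply, one_mul, if_neg k.succ_ne_zero,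
    Nat.add_sub_cancel]
  rw [← hpivot]
  field_simp
  ring

end tridiagStep

theorem MaximalMinorsNonneg.tridiagStep {m : ℕ} {R : Fin m → ℕ → ℝ}
    (hR : MaximalMinorsNonneg R) {r s t : ℕ → ℝ} (hr : ∀ k, 0 ≤ r k) (ht : ∀ k, 0 ≤ t k)
    (hpivot : ∀ k, 0 < pivot r s t k) :
    MaximalMinorsNonneg fun i => _root_.tridiagStep r s t (R i) :=
  (hR.bidiagMul (fun _ => zero_le_one) (fun k => div_nonneg (ht _) (hpivot k).le)
    (fun _ _ h => Nat.add_le_add_right h 1) (fun _ => le_rfl) (fun _ => by omega)).bidiagMul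
    (fun k => (hpivot k).le) (fun k => by split_ifs; exacts [le_rfl, hr k])
    (fun _ _ h => Nat.sub_le_sub_right h 1) (fun _ => by omega) (fun _ => by omega)

theorem recursive_matrix_tp_general (a : ℕ → ℕ → ℝ) (r s t : ℕ → ℝ)
    (hr : ∀ k, 0 ≤ r k) (ht : ∀ k, 0 ≤ t k)
    (ha0 : a 0 0 = 1) (hzero : ∀ n k, n < k → a n k = 0)
    (hrec0 : ∀ n, a (n + 1) 0 = s 0 * a n 0 + t 1 * a n 1)
    (hrec : ∀ n k, a (n + 1) (k + 1)
      = r (k + 1) * a n k + s (k + 1) * a n (k + 1) + t (k + 2) * a n (k + 2))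
    (h0 : 1 ≤ s 0) (hk : ∀ k : ℕ, 1 ≤ k → r k * t k + 1 ≤ s k) :
    IsTotallyPos a := by
  have hpivot k : 0 < pivot r s t k := zero_lt_one.trans_le (one_le_pivot hr ht h0 hk k)
  refine isTotallyPos_of_step (tridiagStep r s t) (fun _ _ hR => hR.tridiagStep hr ht hpivot)
    ?_ fun n => ?_
  · funext k
    rcases k with _ | k
    · simp [ha0]
    · simp [hzero 0 (k + 1) k.succ_pos]
  · funext k
    rcases k with _ | k
    · rw [hrec0, tridiagStep_zero _ (zero_lt_one.trans_le h0).ne']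
    · rw [hrec, tridiagStep_succ _ _ (hpivot k).ne' (hpivot (k + 1)).ne']

/-- If $s_0 \ge 1$ and $s_k \ge r_k t_k + 1$ for all $k \ge 1$,
then the recursive matrix is totally positive. -/
theorem recursive_matrix_tp (a : ℕ → ℕ → ℝ) (r s t : ℕ → ℝ)
    (hr : ∀ k, 0 ≤ r k) (hs : ∀ k, 0 ≤ s k) (ht : ∀ k, 0 ≤ t k)
    (ha0 : a 0 0 = 1) (hzero : ∀ n k, n < k → a n k = 0)
    (hrec0 : ∀ n, a (n + 1) 0 = s 0 * a n 0 + t 1 * a n 1)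
    (hrec : ∀ n k, a (n + 1) (k + 1)
      = r (k + 1) * a n k + s (k + 1) * a n (k + 1) + t (k + 2) * a n (k + 2))
    (h0 : 1 ≤ s 0) (hk : ∀ k : ℕ, 1 ≤ k → r k * t k + 1 ≤ s k) :
    IsTotallyPos a :=
  recursive_matrix_tp_general a r s t hr ht ha0 hzero hrec0 hrec h0 hk
end
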